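/- Let t_1, t_2, … be real numbers and in ℝ[[z]] set s(z) := 1 + t_1 z + t_2 z^2 + ⋯. Then the following identity of formal power series holds: (z/(1 + z(1+z)(t_1 + t_2 z + t_3 z^2 + ⋯)))^{(−1)} + 1 = ((z+1)/z) · ((z/(1 − z + (z/s(z))^{(−1)}))^{(−1)}), where ^{(−1)} denotes compositional inverse of formal power series, and on the right-hand side the inner inverse (z/s(z))^{(−1)} is first formed, then the series z/(1 − z + (z/s(z))^{(−1)}) is inverted, and the result (which has zero constant term) is divided by z and multiplied by z + 1. -/

import Mathlib

open PowerSeries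

/-- Composition `f(g)` of formal power series; this gives the usual composition
whenever `g` has zero constant term (then `coeff n (g^m) = 0` for `m > n`). -/
noncomputable def psComp (f g : PowerSeries ℝ) : PowerSeries ℝ :=
  PowerSeries.mk fun n =>
    ∑ m ∈ Finset.range (n + 1), (PowerSeries.coeff m f) * (PowerSeries.coeff n (g ^ m))

/-- `s(z) = 1 + t₁ z + t₂ z² + ⋯`. -/
noncomputable def seriesS (t : ℕ → ℝ) : PowerSeries ℝ :=
  PowerSeries.mk fun n => if n = 0 then 1 else t n

/-!
Write `g = z/s(z)` and `F = z/(1 + z(1+z)T(z))`, where `1 + z(1+z)T = (1+z)s - z`. The Möbius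
map `y ↦ y/(1 - y + z)` sends `g` to `F`; composing `v₂ ∘ (z/(1 - z + v₁)) = z` on the right
with `g` and using `v₁ ∘ g = z` therefore gives `v₂ ∘ F = g`. The inverse Möbius map
`y ↦ (1+z)y/(1+y)` sends `F` back to `g`, so `w ∘ F = z` gives `(z(1+w)/(1+z)) ∘ F = g` as
well. Since `F = z + ⋯` has a compositional inverse, `v₂ = z(1+w)/(1+z)`.
-/

namespace PowerSeries

section CommRing

variable {R : Type*} [CommRing R]

theorem coeff_pow_eq_zero_of_lt {g : R⟦X⟧} (hg : constantCoeff g = 0) {n m : ℕ} (h : n < m) :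
    coeff n (g ^ m) = 0 :=
  coeff_of_lt_order n <| (Nat.cast_lt.2 h).trans_le (le_order_pow_of_constantCoeff_eq_zero m hg)

theorem subst_one (g : R⟦X⟧) : (1 : R⟦X⟧).subst g = 1 := by
  rw [← map_one (C (R := R)), subst_C]
  rfl

theorem subst_left_injective {P : R⟦X⟧} (hP : constantCoeff P = 0) (hP' : IsUnit (coeff 1 P)) :
    Function.Injective fun f : R⟦X⟧ ↦ f.subst P := by
  have hPQ := P.subst_substInvOfIsUnit_right hP hP'
  have hsubst : HasSubst P := HasSubst.of_constantCoeff_zero' hP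
  intro f₁ f₂ h
  have key (f : R⟦X⟧) : f = PowerSeries.subst (P.substInvOfIsUnit hP') (f.subst P) := by
    rw [subst_comp_subst_apply hsubst (HasSubst.substInvOfIsUnit P hP'), hPQ, X_subst]
  rw [key f₁, key f₂]
  exact congrArg _ h

end CommRing

section Field

variable {k : Type*} [Field k]

theorem subst_inv {g u : k⟦X⟧} (hg : constantCoeff g = 0) (hu : constantCoeff u ≠ 0) :
    u⁻¹.subst g = (u.subst g)⁻¹ := by
  have h : u.subst g * u⁻¹.subst g = 1 := by
    rw [← subst_mul (HasSubst.of_constantCoeff_zero' hg), PowerSeries.mul_inv_cancel u hu,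
      subst_one]
  have hu' : constantCoeff (u.subst g) ≠ 0 :=
    left_ne_zero_of_mul_eq_one (by simpa using congrArg constantCoeff h)
  rw [eq_inv_iff_mul_eq_one hu', mul_comm, h]

theorem subst_X_mul_inv {g u : k⟦X⟧} (hg : constantCoeff g = 0) (hu : constantCoeff u ≠ 0) :
    (X * u⁻¹).subst g = g * (u.subst g)⁻¹ := by
  rw [subst_mul (HasSubst.of_constantCoeff_zero' hg), subst_X (HasSubst.of_constantCoeff_zero' hg),
    subst_inv hg hu]

variable {s : k⟦X⟧}

theorem X_mul_inv_mul_inv_one_sub_add_X (hs : constantCoeff s ≠ 0) :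
    X * s⁻¹ * (1 - X * s⁻¹ + X)⁻¹ = X * ((1 + X) * s - X)⁻¹ := by
  have hss : s * s⁻¹ = 1 := PowerSeries.mul_inv_cancel s hs
  rw [mul_assoc, ← PowerSeries.mul_inv_rev]
  congr 2
  linear_combination (-X) * hss

theorem X_mul_inv_mul_one_add_X_mul_inv_one_add (hs : constantCoeff s ≠ 0) :
    X * ((1 + X) * s - X)⁻¹ * (X + 1) * (1 + X * ((1 + X) * s - X)⁻¹)⁻¹ = X * s⁻¹ := by
  set Q := (1 + X) * s - X with hQ_def
  have hQ : constantCoeff Q ≠ 0 := by simpa [Q] using hs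
  have hF : constantCoeff (1 + X * Q⁻¹) ≠ 0 := by simp
  have hss : s * s⁻¹ = 1 := PowerSeries.mul_inv_cancel s hs
  have hQQ : Q * Q⁻¹ = 1 := PowerSeries.mul_inv_cancel Q hQ
  have hFF := PowerSeries.mul_inv_cancel _ hF
  linear_combination (-X * Q⁻¹ * (X + 1) * (1 + X * Q⁻¹)⁻¹) * hss
    + (X * s⁻¹ * (1 + X * Q⁻¹)⁻¹) * hQQ + (X * s⁻¹) * hFF
    + (X * s⁻¹ * Q⁻¹ * (1 + X * Q⁻¹)⁻¹) * hQ_def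

end Field

end PowerSeries

theorem psComp_eq_subst (f : PowerSeries ℝ) {g : PowerSeries ℝ} (hg : constantCoeff g = 0) :
    psComp f g = f.subst g := by
  ext n
  rw [psComp, coeff_mk, coeff_subst' (HasSubst.of_constantCoeff_zero' hg)]
  refine (finsum_eq_sum_of_support_subset _ fun m hm ↦ ?_).symm
  rw [Finset.coe_range, Set.mem_Iio, Nat.lt_succ_iff]
  by_contra! h
  exact hm (by simp [coeff_pow_eq_zero_of_lt hg h])

theorem seriesS_eq (t : ℕ → ℝ) : seriesS t = 1 + X * mk fun n ↦ t (n + 1) := by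
  ext (_ | n) <;> simp [seriesS, coeff_one]

theorem key_power_series_identity_general (t : ℕ → ℝ)
    (v₁ v₂ w : PowerSeries ℝ)
    -- v₁ = (z/s(z))^{(-1)}
    (hv₁0 : PowerSeries.constantCoeff v₁ = 0)
    (hv₁ : psComp v₁ (PowerSeries.X * (seriesS t)⁻¹) = PowerSeries.X)
    -- v₂ = (z/(1 - z + v₁))^{(-1)}
    (hv₂ : psComp v₂ (PowerSeries.X * (1 - PowerSeries.X + v₁)⁻¹) = PowerSeries.X)
    -- w = (z/(1 + z(1+z)(t₁ + t₂ z + ⋯)))^{(-1)}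
    (hw : psComp w
        (PowerSeries.X *
          (1 + PowerSeries.X * (1 + PowerSeries.X) * PowerSeries.mk fun n => t (n + 1))⁻¹)
      = PowerSeries.X) :
    w + 1 = (1 + PowerSeries.X) * PowerSeries.mk fun n => PowerSeries.coeff (n + 1) v₂ := by
  set s := seriesS t
  set F : ℝ⟦X⟧ := X * ((1 + X) * s - X)⁻¹
  have hs : constantCoeff s ≠ 0 := by simp [s, seriesS]
  have hF0 : constantCoeff F = 0 := by simp [F]
  have hg : HasSubst (X * s⁻¹) := HasSubst.of_constantCoeff_zero' (by simp)
  have hF : HasSubst F := HasSubst.of_constantCoeff_zero' hF0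
  have hsF : 1 + X * (1 + X) * (mk fun n ↦ t (n + 1)) = (1 + X) * s - X := by
    rw [show s = _ from seriesS_eq t]; ring
  rw [psComp_eq_subst _ (by simp)] at hv₁ hv₂
  rw [hsF, psComp_eq_subst _ hF0] at hw
  have hg₂_g₁ : (X * (1 - X + v₁)⁻¹).subst (X * s⁻¹) = F := by
    rw [subst_X_mul_inv (by simp) (by simp [hv₁0]), subst_add hg, subst_sub hg, subst_one,
      subst_X hg, hv₁]
    exact X_mul_inv_mul_inv_one_sub_add_X hs
  have hv₂F : v₂.subst F = X * s⁻¹ := by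
    rw [← hg₂_g₁, ← subst_comp_subst_apply (HasSubst.of_constantCoeff_zero' (by simp)) hg, hv₂,
      subst_X hg]
  have hv₂_eq : v₂ = X * (w + 1) * (1 + X)⁻¹ := by
    refine subst_left_injective hF0 (by simp [F, coeff_succ_X_mul, s, seriesS]) ?_
    dsimp only
    rw [hv₂F, subst_mul hF, subst_mul hF, subst_X hF, subst_add hF, hw, subst_one,
      subst_inv hF0 (by simp), subst_add hF, subst_one, subst_X hF]
    exact (X_mul_inv_mul_one_add_X_mul_inv_one_add hs).symm
  have hv₂_div_X : (mk fun n ↦ coeff (n + 1) v₂) = (w + 1) * (1 + X)⁻¹ := by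
    ext n
    rw [coeff_mk, hv₂_eq, mul_assoc, coeff_succ_X_mul]
  rw [hv₂_div_X, mul_comm, mul_assoc, PowerSeries.inv_mul_cancel _ (by simp), mul_one]

/-- The key identity of formal power series:
`(z/(1 + z(1+z)(t₁ + t₂ z + ⋯)))^{(-1)} + 1
  = ((z+1)/z) · (z/(1 - z + (z/s(z))^{(-1)}))^{(-1)}`,
where `s(z) = 1 + t₁ z + ⋯`.  Each compositional inverse `F^{(-1)}` of a series
`F = z + ⋯` is the unique series `G = z + ⋯` with `G(F(z)) = z`; here it is supplied
as a variable (`v₁`, `v₂`, `w`) together with its defining properties, and division of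
`v₂` by `z` (legitimate since `v₂` has zero constant term) is expressed by shifting
coefficients. -/
theorem key_power_series_identity (t : ℕ → ℝ)
    (v₁ v₂ w : PowerSeries ℝ)
    -- v₁ = (z/s(z))^{(-1)}
    (hv₁0 : PowerSeries.constantCoeff v₁ = 0) (hv₁1 : PowerSeries.coeff 1 v₁ = 1)
    (hv₁ : psComp v₁ (PowerSeries.X * (seriesS t)⁻¹) = PowerSeries.X)
    -- v₂ = (z/(1 - z + v₁))^{(-1)}
    (hv₂0 : PowerSeries.constantCoeff v₂ = 0) (hv₂1 : PowerSeries.coeff 1 v₂ = 1)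
    (hv₂ : psComp v₂ (PowerSeries.X * (1 - PowerSeries.X + v₁)⁻¹) = PowerSeries.X)
    -- w = (z/(1 + z(1+z)(t₁ + t₂ z + ⋯)))^{(-1)}
    (hw0 : PowerSeries.constantCoeff w = 0) (hw1 : PowerSeries.coeff 1 w = 1)
    (hw : psComp w
        (PowerSeries.X *
          (1 + PowerSeries.X * (1 + PowerSeries.X) * PowerSeries.mk fun n => t (n + 1))⁻¹)
      = PowerSeries.X) :
    w + 1 = (1 + PowerSeries.X) * PowerSeries.mk fun n => PowerSeries.coeff (n + 1) v₂ :=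
  key_power_series_identity_general t v₁ v₂ w hv₁0 hv₁ hv₂ hw
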